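/- Let X₁, …, X_D be i.i.d. standard normal random variables and X = Σ_{i=1}^D X_i² (a chi-squared random variable with D degrees of freedom). Then for every t > 0, Pr[X ≥ D + 2·√(D·t) + 2t] ≤ e^{−t}. -/

import Mathlib

/-!
Chernoff bound (Laurent–Massart). For `λ < 1/2` a standard normal `Z` has
`𝔼 exp (λ Z²) = (1 - 2λ)^(-1/2)`, so by independence `X = ∑ Xᵢ²` satisfies
`P(X ≥ a) ≤ exp (-λ a) (1 - 2λ)^(-D/2)`. The estimate `-½ log (1 - 2λ) ≤ λ + λ² / (1 - 2λ)`
and the choice `λ = √t / (√D + 2√t)` make the exponent at `a = D + 2√(Dt) + 2t` exactly `-t`.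
-/

open MeasureTheory ProbabilityTheory Real

lemma gaussianPDFReal_mul_exp_mul_sq (l x : ℝ) :
    gaussianPDFReal 0 1 x * exp (l * x ^ 2) = (√(2 * π))⁻¹ * exp (-(1 / 2 - l) * x ^ 2) := by
  rw [gaussianPDFReal, mul_assoc, ← exp_add]
  push_cast
  ring_nf

lemma integrable_exp_mul_sq_gaussianReal {l : ℝ} (hl : l < 1 / 2) :
    Integrable (fun x => exp (l * x ^ 2)) (gaussianReal 0 1) := by
  rw [gaussianReal_of_var_ne_zero 0 one_ne_zero,
    integrable_withDensity_iff_integrable_smul' (measurable_gaussianPDF 0 1)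
      (ae_of_all _ fun _ => gaussianPDF_lt_top)]
  simp only [toReal_gaussianPDF, smul_eq_mul, gaussianPDFReal_mul_exp_mul_sq]
  exact (integrable_exp_neg_mul_sq (by linarith)).const_mul _

lemma mgf_sq_gaussianReal {l : ℝ} (hl : l < 1 / 2) :
    mgf (fun x => x ^ 2) (gaussianReal 0 1) l = (√(1 - 2 * l))⁻¹ := by
  have hl' : 0 < 1 - 2 * l := by linarith
  rw [mgf, integral_gaussianReal_eq_integral_smul one_ne_zero]
  simp only [smul_eq_mul, gaussianPDFReal_mul_exp_mul_sq]
  rw [integral_const_mul, integral_gaussian,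
    show π / (1 / 2 - l) = 2 * π / (1 - 2 * l) by field_simp, sqrt_div' _ hl'.le]
  have : √(2 * π) ≠ 0 := by positivity
  field_simp

section Pi

variable {ι : Type*} [Fintype ι]

lemma iIndepFun_sq_pi_gaussianReal :
    iIndepFun (fun i (x : ι → ℝ) => x i ^ 2) (Measure.pi fun _ => gaussianReal 0 1) :=
  iIndepFun_pi (X := fun _ y => y ^ 2) fun _ => by fun_prop

lemma mgf_sq_eval_pi_gaussianReal {l : ℝ} (hl : l < 1 / 2) (i : ι) :
    mgf (fun x : ι → ℝ => x i ^ 2) (Measure.pi fun _ => gaussianReal 0 1) l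
      = (√(1 - 2 * l))⁻¹ := by
  calc _ = mgf (fun y => y ^ 2)
          ((Measure.pi fun _ : ι => gaussianReal 0 1).map (Function.eval i)) l :=
        (mgf_map (measurable_pi_apply i).aemeasurable (by fun_prop)).symm
    _ = _ := by rw [(measurePreserving_eval _ i).map_eq, mgf_sq_gaussianReal hl]

lemma integrable_exp_mul_sum_sq_pi_gaussianReal {l : ℝ} (hl : l < 1 / 2) :
    Integrable (fun x : ι → ℝ => exp (l * ∑ i, x i ^ 2))
      (Measure.pi fun _ => gaussianReal 0 1) := by
  have h := iIndepFun_sq_pi_gaussianReal.integrable_exp_mul_sum (t := l) (s := Finset.univ)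
    (fun i => (measurable_pi_apply i).pow_const 2) fun i _ =>
      (measurePreserving_eval (fun _ : ι => gaussianReal 0 1) i).integrable_comp_of_integrable
        (integrable_exp_mul_sq_gaussianReal hl)
  simpa only [Finset.sum_apply] using h

lemma mgf_sum_sq_pi_gaussianReal {l : ℝ} (hl : l < 1 / 2) :
    mgf (fun x : ι → ℝ => ∑ i, x i ^ 2) (Measure.pi fun _ => gaussianReal 0 1) l
      = (√(1 - 2 * l))⁻¹ ^ Fintype.card ι := by
  have h := iIndepFun_sq_pi_gaussianReal.mgf_sum (t := l)
    (fun i => (measurable_pi_apply i).pow_const 2) (Finset.univ : Finset ι)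
  simp only [mgf_sq_eval_pi_gaussianReal hl, Finset.prod_const, Finset.card_univ] at h
  rw [← h, Finset.sum_fn]

lemma measureReal_sum_sq_pi_gaussianReal_ge_le {l : ℝ} (hl0 : 0 ≤ l) (hl : l < 1 / 2) (a : ℝ) :
    (Measure.pi fun _ : ι => gaussianReal 0 1).real {x | a ≤ ∑ i, x i ^ 2}
      ≤ exp (-l * a) * (√(1 - 2 * l))⁻¹ ^ Fintype.card ι := by
  rw [← mgf_sum_sq_pi_gaussianReal hl]
  exact measure_ge_le_exp_mul_mgf a hl0 (integrable_exp_mul_sum_sq_pi_gaussianReal hl)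

end Pi

lemma neg_log_one_sub_le {x : ℝ} (hx0 : 0 ≤ x) (hx1 : x < 1) :
    -log (1 - x) ≤ x + x ^ 2 / (2 * (1 - x)) := by
  have hu : 0 < 1 - x := by linarith
  set s := x + x ^ 2 / (2 * (1 - x)) with hs
  rw [← log_inv, log_le_iff_le_exp (by positivity), inv_le_iff_one_le_mul₀ hu]
  calc 1 ≤ 1 + x ^ 4 / (8 * (1 - x)) := le_add_of_nonneg_right (by positivity)
    _ = (1 + s + s ^ 2 / 2) * (1 - x) := by rw [hs]; field_simp; ring
    _ ≤ exp s * (1 - x) := by gcongr; exact quadratic_le_exp_of_nonneg (by positivity)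

lemma inv_sqrt_one_sub_two_mul_le_exp {l : ℝ} (hl0 : 0 ≤ l) (hl : l < 1 / 2) :
    (√(1 - 2 * l))⁻¹ ≤ exp (l + l ^ 2 / (1 - 2 * l)) := by
  have hu : 0 < 1 - 2 * l := by linarith
  have h := neg_log_one_sub_le (x := 2 * l) (by linarith) (by linarith)
  rw [← exp_log (inv_pos.2 (sqrt_pos.2 hu)), log_inv, log_sqrt hu.le, exp_le_exp]
  have : 2 * l + (2 * l) ^ 2 / (2 * (1 - 2 * l)) = 2 * (l + l ^ 2 / (1 - 2 * l)) := by
    field_simp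
  linarith

lemma chernoff_exponent_eq {d t l : ℝ} (hd : 0 < d) (ht : 0 ≤ t)
    (hl : l = √t / (√d + 2 * √t)) :
    -l * (d + 2 * √(d * t) + 2 * t) + d * (l + l ^ 2 / (1 - 2 * l)) = -t := by
  obtain ⟨s, hs, rfl⟩ : ∃ s > 0, s ^ 2 = d := ⟨√d, sqrt_pos.2 hd, sq_sqrt hd.le⟩
  obtain ⟨r, hr, rfl⟩ : ∃ r ≥ 0, r ^ 2 = t := ⟨√t, sqrt_nonneg t, sq_sqrt ht⟩
  rw [sqrt_sq hs.le, sqrt_sq hr] at hl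
  have h1 : 1 - 2 * l = s / (s + 2 * r) := by
    rw [hl]; field_simp; ring
  rw [← mul_pow, sqrt_sq (by positivity), h1, hl]
  field_simp
  ring

theorem chi_squared_tail_bound (D : ℕ) (t : ℝ) (ht : 0 < t) :
    (Measure.pi fun _ : Fin D => gaussianReal 0 1)
        {x | (D : ℝ) + 2 * Real.sqrt (D * t) + 2 * t ≤ ∑ i, x i ^ 2} ≤
      ENNReal.ofReal (Real.exp (-t)) := by
  rcases Nat.eq_zero_or_pos D with rfl | hD
  · simp [show ¬ 2 * t ≤ 0 by linarith]
  have hD' : (0 : ℝ) < D := Nat.cast_pos.2 hD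
  set l := √t / (√D + 2 * √t) with hl
  have hl0 : 0 ≤ l := by positivity
  have hl1 : l < 1 / 2 := by
    rw [hl, div_lt_iff₀ (by positivity)]
    linarith [sqrt_pos.2 hD']
  rw [← ofReal_measureReal (measure_ne_top _ _)]
  refine ENNReal.ofReal_le_ofReal ?_
  calc _ ≤ exp (-l * (D + 2 * √(D * t) + 2 * t)) * (√(1 - 2 * l))⁻¹ ^ D := by
        simpa using measureReal_sum_sq_pi_gaussianReal_ge_le (ι := Fin D) hl0 hl1 _
    _ ≤ exp (-l * (D + 2 * √(D * t) + 2 * t)) * exp (l + l ^ 2 / (1 - 2 * l)) ^ D := by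
        gcongr
        exact inv_sqrt_one_sub_two_mul_le_exp hl0 hl1
    _ = exp (-t) := by
        rw [← exp_nat_mul, ← exp_add, chernoff_exponent_eq hD' ht.le hl]
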